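/- arXiv:2012.00283 — 4 statements merged into one kernel-verified Lean document; each statement's English description precedes it below -/
import Mathlib

section
/- Let $H, M, A$ be $k \times k$ matrices over a field, with $A = \sum_{i=0}^{m-1} H^i M H^i$ for some positive integer $m$. Suppose $R$ and $S$ are $k \times k$ matrices commuting with $H$ such that $R M S = H A H + M - A$. Then for any positive integer $n$, letting $B = \sum_{i=0}^{n-1} H^i M H^i$, we have $R B S + A = \sum_{i=0}^{m+n-1} H^i M H^i$. -/
/-! The telescoping identity `H A H + M - A = Hᵐ M Hᵐ` turns the hypothesis into
`R M S = Hᵐ M Hᵐ`; since `R` and `S` commute with `H`, conjugating `Hⁱ M Hⁱ` by them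
shifts it to `Hᵐ⁺ⁱ M Hᵐ⁺ⁱ`, which is exactly the tail of the longer sum. -/

open Finset

section PowSandwichSum

variable {α : Type*} [Semiring α]

theorem mul_sum_pow_mul_pow_mul_add (H M : α) (m : ℕ) :
    H * (∑ i ∈ range m, H ^ i * M * H ^ i) * H + M =
      ∑ i ∈ range (m + 1), H ^ i * M * H ^ i := by
  rw [sum_range_succ', mul_sum, sum_mul]
  congr 1
  · refine sum_congr rfl fun i _ => ?_
    simp only [← mul_assoc, ← pow_succ']
    rw [mul_assoc _ (H ^ i) H, ← pow_succ]
  · simp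

theorem sum_range_add_pow_mul_pow (H M : α) (m n : ℕ) :
    ∑ i ∈ range (m + n), H ^ i * M * H ^ i =
      ∑ i ∈ range m, H ^ i * M * H ^ i + ∑ i ∈ range n, H ^ i * (H ^ m * M * H ^ m) * H ^ i := by
  rw [sum_range_add]
  congr 1
  refine sum_congr rfl fun i _ => ?_
  rw [pow_add]
  nth_rw 1 [pow_mul_comm H m i]
  simp only [mul_assoc]

theorem Commute.mul_sum_pow_mul_pow_mul {H R S : α} (hR : Commute R H)
    (hS : Commute S H) (M : α) (n : ℕ) :
    R * (∑ i ∈ range n, H ^ i * M * H ^ i) * S = ∑ i ∈ range n, H ^ i * (R * M * S) * H ^ i := by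
  rw [mul_sum, sum_mul]
  refine sum_congr rfl fun i _ => ?_
  calc R * (H ^ i * M * H ^ i) * S = (R * H ^ i) * M * (H ^ i * S) := by simp only [mul_assoc]
    _ = (H ^ i * R) * M * (S * H ^ i) := by rw [(hR.pow_right i).eq, (hS.pow_right i).eq]
    _ = H ^ i * (R * M * S) * H ^ i := by simp only [mul_assoc]

end PowSandwichSum

theorem stmt_0_general {k : ℕ} {F : Type*} [Field F]
    (H M A R S : Matrix (Fin k) (Fin k) F) (m n : ℕ)
    (hA : A = ∑ i ∈ Finset.range m, H ^ i * M * H ^ i)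
    (hR : R * H = H * R) (hS : S * H = H * S)
    (hRS : R * M * S = H * A * H + M - A) :
    R * (∑ i ∈ Finset.range n, H ^ i * M * H ^ i) * S + A =
      ∑ i ∈ Finset.range (m + n), H ^ i * M * H ^ i := by
  have hRMS : R * M * S = H ^ m * M * H ^ m := by
    rw [hRS, hA, mul_sum_pow_mul_pow_mul_add, sum_range_succ, add_sub_cancel_left]
  rw [Commute.mul_sum_pow_mul_pow_mul hR hS, hRMS, sum_range_add_pow_mul_pow, hA, add_comm]

theorem stmt_0 {k : ℕ} {F : Type*} [Field F]
    (H M A R S : Matrix (Fin k) (Fin k) F) (m n : ℕ) (hm : 0 < m) (hn : 0 < n)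
    (hA : A = ∑ i ∈ Finset.range m, H ^ i * M * H ^ i)
    (hR : R * H = H * R) (hS : S * H = H * S)
    (hRS : R * M * S = H * A * H + M - A) :
    R * (∑ i ∈ Finset.range n, H ^ i * M * H ^ i) * S + A =
      ∑ i ∈ Finset.range (m + n), H ^ i * M * H ^ i :=
  stmt_0_general H M A R S m n hA hR hS hRS
end

section
/- Let $H, M, A, B$ be $k \times k$ matrices over a field with $A = \sum_{i=0}^{m-1} H^i M H^i$ and $B = \sum_{i=0}^{n-1} H^i M H^i$. Suppose $f, g$ are polynomials such that $f(H) M = (H A H + M - A)\, g(H)$ and $g(H)$ is invertible. Then $f(H)\, B\, g(H)^{-1} + A = \sum_{i=0}^{m+n-1} H^i M H^i$. -/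
/-!
Write `S n M = ∑_{i<n} H^i M H^i`. Then `H (S m M) H + M - S m M = H^m M H^m` telescopes, so the
hypothesis says `f(H) M g(H)⁻¹ = H^m M H^m`. Since `f(H)` and `g(H)⁻¹` commute with `H`, conjugating
`S n M` by them gives `S n (H^m M H^m) = ∑_{m ≤ i < m+n} H^i M H^i`, and adding `S m M` yields `S (m+n) M`.
-/

open Finset Polynomial

section PowConjSum

variable {R : Type*}

def powConjSum [Semiring R] (H M : R) (n : ℕ) : R :=
  ∑ i ∈ range n, H ^ i * M * H ^ i

theorem mul_powConjSum_mul [Semiring R] {H P Q : R} (hP : Commute P H) (hQ : Commute Q H)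
    (M : R) (n : ℕ) : P * powConjSum H M n * Q = powConjSum H (P * M * Q) n := by
  simp only [powConjSum, mul_sum, sum_mul]
  refine sum_congr rfl fun i _ => ?_
  calc P * (H ^ i * M * H ^ i) * Q = P * H ^ i * M * (H ^ i * Q) := by simp only [mul_assoc]
    _ = H ^ i * (P * M * Q) * H ^ i := by
      rw [(hP.pow_right i).eq, (hQ.pow_right i).symm.eq]; simp only [mul_assoc]

theorem powConjSum_one [Semiring R] (H M : R) : powConjSum H M 1 = M := by
  simp [powConjSum]

theorem powConjSum_add [Semiring R] (H M : R) (m n : ℕ) :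
    powConjSum H M (m + n) = powConjSum H M m + powConjSum H (H ^ m * M * H ^ m) n := by
  simp only [powConjSum, sum_range_add]
  congr 1
  refine sum_congr rfl fun i _ => ?_
  calc H ^ (m + i) * M * H ^ (m + i) = H ^ i * H ^ m * M * (H ^ m * H ^ i) := by
        rw [← pow_add, ← pow_add, add_comm i m]
    _ = H ^ i * (H ^ m * M * H ^ m) * H ^ i := by simp only [mul_assoc]

theorem powConjSum_telescope [Ring R] (H M : R) (m : ℕ) :
    H * powConjSum H M m * H + M - powConjSum H M m = H ^ m * M * H ^ m := by
  have hshift : H * powConjSum H M m * H + M = powConjSum H M (m + 1) := by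
    rw [mul_powConjSum_mul (Commute.refl H) (Commute.refl H), add_comm m, powConjSum_add,
      powConjSum_one, pow_one, add_comm]
  rw [hshift, powConjSum_add, powConjSum_one, add_sub_cancel_left]

end PowConjSum

theorem stmt_10_general {k : ℕ} {F : Type*} [Field F]
    (H M A B : Matrix (Fin k) (Fin k) F) (m n : ℕ)
    (hA : A = ∑ i ∈ Finset.range m, H ^ i * M * H ^ i)
    (hB : B = ∑ i ∈ Finset.range n, H ^ i * M * H ^ i)
    (f g : Polynomial F)
    (hfg : Polynomial.aeval H f * M = (H * A * H + M - A) * Polynomial.aeval H g)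
    (hg : IsUnit (Polynomial.aeval H g)) :
    Polynomial.aeval H f * B * (Polynomial.aeval H g)⁻¹ + A =
      ∑ i ∈ Finset.range (m + n), H ^ i * M * H ^ i := by
  have hcomm (p : F[X]) : Commute (aeval H p) H := by
    simpa using ((commute_X p).map (aeval H)).symm
  have hginv : Commute (aeval H g)⁻¹ H := by
    rw [Matrix.nonsing_inv_eq_ringInverse, ← hg.unit_spec, Ring.inverse_unit]
    exact (hg.unit_spec ▸ hcomm g).units_inv_left
  have hfMg : aeval H f * M * (aeval H g)⁻¹ = H ^ m * M * H ^ m := by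
    rw [hfg, hA, ← powConjSum, powConjSum_telescope,
      Matrix.mul_nonsing_inv_cancel_right _ _ ((Matrix.isUnit_iff_isUnit_det _).mp hg)]
  rw [hB, ← powConjSum, mul_powConjSum_mul (hcomm f) hginv, hfMg, hA, ← powConjSum,
    ← powConjSum, powConjSum_add, add_comm]

theorem stmt_10 {k : ℕ} {F : Type*} [Field F]
    (H M A B : Matrix (Fin k) (Fin k) F) (m n : ℕ) (hm : 0 < m) (hn : 0 < n)
    (hA : A = ∑ i ∈ Finset.range m, H ^ i * M * H ^ i)
    (hB : B = ∑ i ∈ Finset.range n, H ^ i * M * H ^ i)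
    (f g : Polynomial F)
    (hfg : Polynomial.aeval H f * M = (H * A * H + M - A) * Polynomial.aeval H g)
    (hg : IsUnit (Polynomial.aeval H g)) :
    Polynomial.aeval H f * B * (Polynomial.aeval H g)⁻¹ + A =
      ∑ i ∈ Finset.range (m + n), H ^ i * M * H ^ i :=
  stmt_10_general H M A B m n hA hB f g hfg hg
end

section
/- Let $H$ be an invertible $k \times k$ matrix over a finite field $\mathbb{F}_p$ and let $M, A$ be matrices with $A = \sum_{i=0}^{m-1} H^i M H^i$. Then there exist matrices $R, S$, each a polynomial in $H$ of degree at most $k-1$ (with $S$ invertible), such that $R M S = H A H + M - A$. -/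
/-!
Take `R = S = H ^ m`. The sum defining `A` telescopes: `H * A * H + M - A = H ^ m * M * H ^ m`.
By Cayley–Hamilton, `H ^ m` is the value at `H` of `X ^ m` reduced modulo the characteristic
polynomial, which has degree `k`.
-/

open Polynomial

theorem mul_sum_pow_mul_pow_mul_add_sub_sum {R : Type*} [Ring R] (H M : R) (m : ℕ) :
    H * (∑ i ∈ Finset.range m, H ^ i * M * H ^ i) * H + M
      - ∑ i ∈ Finset.range m, H ^ i * M * H ^ i = H ^ m * M * H ^ m := by
  have shift : H * (∑ i ∈ Finset.range m, H ^ i * M * H ^ i) * H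
      = ∑ i ∈ Finset.range m, H ^ (i + 1) * M * H ^ (i + 1) := by
    rw [Finset.mul_sum, Finset.sum_mul]
    refine Finset.sum_congr rfl fun i _ => ?_
    rw [pow_succ']
    simp only [mul_assoc]
    rw [(Commute.self_pow H i).eq]
  have telescope := Finset.sum_range_sub (fun i => H ^ i * M * H ^ i) m
  rw [Finset.sum_sub_distrib, pow_zero, one_mul, mul_one] at telescope
  rw [shift, add_sub_right_comm, telescope, sub_add_cancel]

theorem Matrix.exists_natDegree_le_aeval_eq {n R : Type*} [Fintype n] [DecidableEq n]
    [CommRing R] (M : Matrix n n R) (f : R[X]) :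
    ∃ g : R[X], g.natDegree ≤ Fintype.card n - 1 ∧ aeval M g = aeval M f := by
  by_cases hM : Subsingleton (Matrix n n R)
  · exact ⟨0, by simp, Subsingleton.elim _ _⟩
  have : Nontrivial R := by
    by_contra hR
    exact hM (by rw [not_nontrivial_iff_subsingleton] at hR; infer_instance)
  have : Nonempty n := by
    by_contra hn
    exact hM (by rw [not_nonempty_iff] at hn; infer_instance)
  have hdeg : M.charpoly.natDegree = Fintype.card n := M.charpoly_natDegree_eq_dim
  have hne : M.charpoly ≠ 1 := fun h => by
    rw [h, natDegree_one] at hdeg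
    exact Fintype.card_ne_zero hdeg.symm
  refine ⟨f %ₘ M.charpoly, ?_, (M.aeval_eq_aeval_mod_charpoly f).symm⟩
  have := natDegree_modByMonic_lt f M.charpoly_monic hne
  omega

theorem stmt_13_general {k p : ℕ}
    (H M A : Matrix (Fin k) (Fin k) (ZMod p)) (hH : IsUnit H)
    (m : ℕ)
    (hA : A = ∑ i ∈ Finset.range m, H ^ i * M * H ^ i) :
    ∃ R S : Matrix (Fin k) (Fin k) (ZMod p),
      (∃ f : Polynomial (ZMod p), f.natDegree ≤ k - 1 ∧ Polynomial.aeval H f = R) ∧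
      (∃ g : Polynomial (ZMod p), g.natDegree ≤ k - 1 ∧ Polynomial.aeval H g = S) ∧
      IsUnit S ∧ R * M * S = H * A * H + M - A := by
  obtain ⟨f, hdeg, hf⟩ := H.exists_natDegree_le_aeval_eq (X ^ m)
  rw [Fintype.card_fin] at hdeg
  rw [aeval_X_pow] at hf
  refine ⟨H ^ m, H ^ m, ⟨f, hdeg, hf⟩, ⟨f, hdeg, hf⟩, hH.pow m, ?_⟩
  rw [hA, mul_sum_pow_mul_pow_mul_add_sub_sum]

theorem stmt_13 {k p : ℕ} [Fact p.Prime]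
    (H M A : Matrix (Fin k) (Fin k) (ZMod p)) (hH : IsUnit H)
    (m : ℕ) (hm : 0 < m)
    (hA : A = ∑ i ∈ Finset.range m, H ^ i * M * H ^ i) :
    ∃ R S : Matrix (Fin k) (Fin k) (ZMod p),
      (∃ f : Polynomial (ZMod p), f.natDegree ≤ k - 1 ∧ Polynomial.aeval H f = R) ∧
      (∃ g : Polynomial (ZMod p), g.natDegree ≤ k - 1 ∧ Polynomial.aeval H g = S) ∧
      IsUnit S ∧ R * M * S = H * A * H + M - A :=
  stmt_13_general H M A hH m hA
end

section
/- Let $H, M, A, B$ be $k \times k$ matrices over a field, and suppose $R, S$ commute with $H$, $R M S = H A H + M - A$, and $B = \sum_{i=0}^{n-1} H^i M H^i$. Then $R B S = H^n A H^n + \sum_{i=0}^{n-1} H^i M H^i - A$. -/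
/-! Since `R` and `S` commute with `H`, they pass through the powers `H ^ i`, so `R * B * S` is
the sum of `H ^ i * (H * A * H - A + M) * H ^ i`. The `A`-part of the `i`-th summand is
`H ^ (i + 1) * A * H ^ (i + 1) - H ^ i * A * H ^ i`, and these telescope to `H ^ n * A * H ^ n - A`. -/

theorem pow_mul_mul_mul_pow {M : Type*} [Monoid M] (h a : M) (i : ℕ) :
    h ^ i * (h * a * h) * h ^ i = h ^ (i + 1) * a * h ^ (i + 1) := by
  nth_rw 1 [pow_succ]
  rw [pow_succ']
  simp only [mul_assoc]

theorem sum_range_pow_mul_sub_mul_pow {R : Type*} [Ring R] (h a : R) (n : ℕ) :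
    ∑ i ∈ Finset.range n, h ^ i * (h * a * h - a) * h ^ i = h ^ n * a * h ^ n - a := by
  simp only [mul_sub, sub_mul, pow_mul_mul_mul_pow]
  simpa using Finset.sum_range_sub (fun i => h ^ i * a * h ^ i) n

theorem Commute.mul_sum_pow_mul_mul_pow_mul {R : Type*} [Semiring R] {r s h : R}
    (hr : Commute r h) (hs : Commute s h) (x : R) (n : ℕ) :
    r * (∑ i ∈ Finset.range n, h ^ i * x * h ^ i) * s
      = ∑ i ∈ Finset.range n, h ^ i * (r * x * s) * h ^ i := by
  rw [Finset.mul_sum, Finset.sum_mul]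
  refine Finset.sum_congr rfl fun i _ => ?_
  calc r * (h ^ i * x * h ^ i) * s
      = (r * h ^ i) * x * (h ^ i * s) := by simp only [mul_assoc]
    _ = (h ^ i * r) * x * (s * h ^ i) := by rw [(hr.pow_right i).eq, (hs.pow_right i).eq]
    _ = h ^ i * (r * x * s) * h ^ i := by simp only [mul_assoc]

theorem stmt_14_general {k : ℕ} {F : Type*} [Field F]
    (H M A B R S : Matrix (Fin k) (Fin k) F) (n : ℕ)
    (hR : R * H = H * R) (hS : S * H = H * S)
    (hRS : R * M * S = H * A * H + M - A)
    (hB : B = ∑ i ∈ Finset.range n, H ^ i * M * H ^ i) :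
    R * B * S = H ^ n * A * H ^ n + (∑ i ∈ Finset.range n, H ^ i * M * H ^ i) - A := by
  have hsplit : ∀ i, H ^ i * (R * M * S) * H ^ i
      = H ^ i * (H * A * H - A) * H ^ i + H ^ i * M * H ^ i := by
    intro i
    rw [hRS, add_sub_right_comm, mul_add, add_mul]
  rw [hB, Commute.mul_sum_pow_mul_mul_pow_mul hR hS, Finset.sum_congr rfl fun i _ => hsplit i,
    Finset.sum_add_distrib, sum_range_pow_mul_sub_mul_pow]
  abel

theorem stmt_14 {k : ℕ} {F : Type*} [Field F]
    (H M A B R S : Matrix (Fin k) (Fin k) F) (n : ℕ) (hn : 0 < n)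
    (hR : R * H = H * R) (hS : S * H = H * S)
    (hRS : R * M * S = H * A * H + M - A)
    (hB : B = ∑ i ∈ Finset.range n, H ^ i * M * H ^ i) :
    R * B * S = H ^ n * A * H ^ n + (∑ i ∈ Finset.range n, H ^ i * M * H ^ i) - A :=
  stmt_14_general H M A B R S n hR hS hRS hB
end
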